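/- arXiv:2002.06836 — 5 statements merged into one kernel-verified Lean document; each statement's English description precedes it below -/
import Mathlib

section
/- In a finite Markov decision process, the k-persistent Bellman expectation operator T^π_k, defined by (T^π_k f)(s,a) = r_k(s,a) + γ^k (P^π_k f)(s,a) where P_k = (P^δ)^{k-1} P and r_k = ∑_{i=0}^{k-1} γ^i (P^δ)^i r, satisfies T^π_k = (T^δ)^{k-1} ∘ T^π, where T^π f = r + γ P^π f and T^δ f = r + γ P^δ f. -/
/-!
Writing `T^δ` as the affine map `f ↦ r + γ • P^δ f` with linear part `γ • P^δ`, its `n`-th iterate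
is `f ↦ ∑_{i<n} γ^i (P^δ)^i r + γ^n (P^δ)^n f`. Applied to `T^π f = r + γ P^π f` with `n = k - 1`,
the `(P^δ)^{k-1} r` term completes the sum to `r_k` and the remaining term is `γ^k (P^δ)^{k-1} P^π f`.
-/

open Finset

theorem Module.End.iterate_affine_apply {R M : Type*} [CommSemiring R] [AddCommMonoid M]
    [Module R M] (L : Module.End R M) (c : R) (b : M) (n : ℕ) (x : M) :
    (fun y => b + c • L y)^[n] x = ∑ i ∈ range n, c ^ i • (L ^ i) b + c ^ n • (L ^ n) x := by
  induction n generalizing x with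
  | zero => simp
  | succ n ih =>
    rw [Function.iterate_succ_apply, ih, map_add, map_smul, sum_range_succ, pow_succ L,
      Module.End.mul_apply, pow_succ c, mul_smul, smul_add, add_assoc]

theorem isLinearMap_of_eq_sum_mul_comp {R ι κ : Type*} [CommSemiring R] [Fintype κ]
    (K : ι → κ → R) (g : ι → κ → ι) (Q : (ι → R) → ι → R)
    (hQ : ∀ f x, Q f x = ∑ y, K x y * f (g x y)) :
    IsLinearMap R Q where
  map_add f₁ f₂ := funext fun x => by simp only [hQ, Pi.add_apply, mul_add, sum_add_distrib]
  map_smul c f := funext fun x => by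
    simp only [hQ, Pi.smul_apply, smul_eq_mul, mul_sum, mul_left_comm]

theorem stmt_2_general {S A : Type*} [Fintype S]
    (P : S → A → S → ℝ) (r : S × A → ℝ) (γ : ℝ)
    (k : ℕ) (hk : 1 ≤ k)
    (Pπ : (S × A → ℝ) → (S × A → ℝ))
    (Pδ : (S × A → ℝ) → (S × A → ℝ))
    (hPδ : ∀ f sa, Pδ f sa = ∑ s', P sa.1 sa.2 s' * f (s', sa.2))
    (Tπ : (S × A → ℝ) → (S × A → ℝ)) (hTπ : ∀ f, Tπ f = r + γ • Pπ f)
    (Tδ : (S × A → ℝ) → (S × A → ℝ)) (hTδ : ∀ f, Tδ f = r + γ • Pδ f)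
    (rk : S × A → ℝ) (hrk : rk = ∑ i ∈ Finset.range k, γ ^ i • Pδ^[i] r)
    (Tπk : (S × A → ℝ) → (S × A → ℝ))
    (hTπk : ∀ f, Tπk f = rk + γ ^ k • Pδ^[k - 1] (Pπ f)) :
    ∀ f : S × A → ℝ, Tπk f = Tδ^[k - 1] (Tπ f) := by
  intro f
  let L : Module.End ℝ (S × A → ℝ) :=
    IsLinearMap.mk' Pδ (isLinearMap_of_eq_sum_mul_comp _ (fun sa s' => (s', sa.2)) Pδ hPδ)
  have hL : ∀ n, Pδ^[n] = ⇑(L ^ n) := fun n => (Module.End.coe_pow L n).symm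
  have hTδL : Tδ = fun y => r + γ • L y := funext hTδ
  obtain ⟨m, rfl⟩ : ∃ m, k = m + 1 := ⟨k - 1, by omega⟩
  rw [hTπk, hrk, hTδL, hTπ, Nat.add_sub_cancel, Module.End.iterate_affine_apply L γ r m]
  simp only [hL, map_add, map_smul, sum_range_succ, pow_succ γ, mul_smul, smul_add, add_assoc]

theorem stmt_2 {S A : Type*} [Fintype S] [Fintype A]
    (P : S → A → S → ℝ) (r : S × A → ℝ) (γ : ℝ) (π : S → A → ℝ)
    (hγ0 : 0 ≤ γ) (hγ1 : γ < 1)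
    (hP0 : ∀ s a s', 0 ≤ P s a s') (hP1 : ∀ s a, ∑ s', P s a s' = 1)
    (hπ0 : ∀ s a, 0 ≤ π s a) (hπ1 : ∀ s, ∑ a, π s a = 1)
    (k : ℕ) (hk : 1 ≤ k)
    (Pπ : (S × A → ℝ) → (S × A → ℝ))
    (hPπ : ∀ f sa, Pπ f sa = ∑ s', P sa.1 sa.2 s' * ∑ a', π s' a' * f (s', a'))
    (Pδ : (S × A → ℝ) → (S × A → ℝ))
    (hPδ : ∀ f sa, Pδ f sa = ∑ s', P sa.1 sa.2 s' * f (s', sa.2))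
    (Tπ : (S × A → ℝ) → (S × A → ℝ)) (hTπ : ∀ f, Tπ f = r + γ • Pπ f)
    (Tδ : (S × A → ℝ) → (S × A → ℝ)) (hTδ : ∀ f, Tδ f = r + γ • Pδ f)
    (rk : S × A → ℝ) (hrk : rk = ∑ i ∈ Finset.range k, γ ^ i • Pδ^[i] r)
    (Tπk : (S × A → ℝ) → (S × A → ℝ))
    (hTπk : ∀ f, Tπk f = rk + γ ^ k • Pδ^[k - 1] (Pπ f)) :
    ∀ f : S × A → ℝ, Tπk f = Tδ^[k - 1] (Tπ f) :=
  stmt_2_general P r γ k hk Pπ Pδ hPδ Tπ hTπ Tδ hTδ rk hrk Tπk hTπk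
end

section
/- Let Q^π be the fixed point of T^π and Q^π_k the fixed point of T^π_k = (T^δ)^{k-1} ∘ T^π, where T^π f = r + γ P^π f and T^δ f = r + γ P^δ f with ‖P^π‖ ≤ 1 (sup-norm operator bound) and 0 ≤ γ < 1. Then Q^π − Q^π_k = (Id − γ^k (P^π)^k)^{-1} ( (T^π)^k Q^π_k − (T^δ)^{k-1} T^π Q^π_k ), where the inverse is given by the Neumann series ∑_{j≥0} γ^{kj} (P^π)^{kj}. -/
/-!
Since `Tπ` is affine with linear part `γ • Pπ`, the `k`-fold iterate satisfies
`Tπ^[k] f - Tπ^[k] g = M (f - g)` with `M = (γ • Pπ) ^ k`. Applying this to the fixed point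
`Qπ = Tπ^[k] Qπ` gives `e = M e + b` for `e = Qπ - Qπk` and the Bellman residual
`b = Tπ^[k] Qπk - Qπk`. As `‖M‖ ≤ γ ^ k < 1`, the operator `1 - M` is inverted by the Neumann
series `∑ M ^ j`, and `M ^ j = γ ^ (k * j) • Pπ ^ (k * j)`.
-/

theorem iterate_sub_iterate_of_affine {R E F : Type*} [Ring R] [AddCommGroup E] [Module R E]
    [FunLike F E E] [LinearMapClass F R E E] (P : F) (r : E) (c : R) {T : E → E}
    (hT : ∀ f, T f = r + c • P f) (n : ℕ) (f g : E) :
    T^[n] f - T^[n] g = c ^ n • (⇑P)^[n] (f - g) := by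
  induction n with
  | zero => simp
  | succ n ih =>
    simp only [Function.iterate_succ_apply', hT, add_sub_add_left_eq_sub, ← smul_sub,
      ← map_sub, ih, map_smul, smul_smul, pow_succ']

namespace ContinuousLinearMap

variable {𝕜 E : Type*} [NontriviallyNormedField 𝕜] [NormedAddCommGroup E] [NormedSpace 𝕜 E]

theorem smul_pow_apply (c : 𝕜) (P : E →L[𝕜] E) (n : ℕ) (x : E) :
    ((c • P) ^ n) x = c ^ n • (⇑P)^[n] x := by
  rw [smul_pow, smul_apply, pow_apply_eq_iterate]

theorem norm_smul_pow_lt_one {c : 𝕜} (hc : ‖c‖ < 1) {P : E →L[𝕜] E} (hP : ‖P‖ ≤ 1) {n : ℕ}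
    (hn : n ≠ 0) : ‖(c • P) ^ n‖ < 1 :=
  calc ‖(c • P) ^ n‖ ≤ ‖c • P‖ ^ n := norm_pow_le' _ (Nat.pos_of_ne_zero hn)
    _ < 1 := pow_lt_one₀ (norm_nonneg _) ((opNorm_smul_le c P).trans_lt <| by
        nlinarith [norm_nonneg c, norm_nonneg P]) hn

theorem eq_tsum_pow_apply_of_eq_add [CompleteSpace E] {M : E →L[𝕜] E} (hM : ‖M‖ < 1)
    {e b : E} (h : e = M e + b) : e = ∑' j, (M ^ j) b := by
  have hb : (1 - M) e = b := by
    rw [sub_apply, one_apply_eq_self, sub_eq_iff_eq_add']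
    exact h
  calc e = ((∑' j, M ^ j) * (1 - M)) e := by rw [geom_series_mul_neg M hM, one_apply_eq_self]
    _ = (∑' j, M ^ j) b := by rw [mul_apply_eq_comp, hb]
    _ = ∑' j, (M ^ j) b :=
      ((summable_geometric_of_norm_lt_one hM).hasSum.mapL (apply 𝕜 E b)).tsum_eq.symm

end ContinuousLinearMap

theorem stmt_6_general {S A : Type*} [Fintype S] [Fintype A]
    (Pπ : ((S × A) → ℝ) →L[ℝ] ((S × A) → ℝ))
    (hPπ : ‖Pπ‖ ≤ 1)
    (r : (S × A) → ℝ) (γ : ℝ) (hγ0 : 0 ≤ γ) (hγ1 : γ < 1)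
    (k : ℕ) (hk : 1 ≤ k)
    (Tπ Tδ : ((S × A) → ℝ) → ((S × A) → ℝ))
    (hTπ : ∀ f, Tπ f = r + γ • Pπ f)
    (Qπ Qπk : (S × A) → ℝ)
    (hQπ : Tπ Qπ = Qπ) (hQπk : Tδ^[k - 1] (Tπ Qπk) = Qπk) :
    Qπ - Qπk =
      ∑' j : ℕ, γ ^ (k * j) • (⇑Pπ)^[k * j] (Tπ^[k] Qπk - Tδ^[k - 1] (Tπ Qπk)) := by
  set M := (γ • Pπ) ^ k
  have hM : ‖M‖ < 1 := ContinuousLinearMap.norm_smul_pow_lt_one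
    (by rwa [Real.norm_of_nonneg hγ0]) hPπ (by omega)
  have hcontract : Tπ^[k] Qπ - Tπ^[k] Qπk = M (Qπ - Qπk) := by
    rw [iterate_sub_iterate_of_affine Pπ r γ hTπ, ContinuousLinearMap.smul_pow_apply]
  have hresidual : Qπ - Qπk = M (Qπ - Qπk) + (Tπ^[k] Qπk - Qπk) := by
    rw [← hcontract, Function.iterate_fixed hQπ]
    abel
  rw [hQπk, ContinuousLinearMap.eq_tsum_pow_apply_of_eq_add hM hresidual]
  refine tsum_congr fun j => ?_
  rw [← pow_mul, ContinuousLinearMap.smul_pow_apply]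

theorem stmt_6 {S A : Type*} [Fintype S] [Fintype A]
    (Pπ Pδ : ((S × A) → ℝ) →L[ℝ] ((S × A) → ℝ))
    (hPπ : ‖Pπ‖ ≤ 1) (hPδ : ‖Pδ‖ ≤ 1)
    (r : (S × A) → ℝ) (γ : ℝ) (hγ0 : 0 ≤ γ) (hγ1 : γ < 1)
    (k : ℕ) (hk : 1 ≤ k)
    (Tπ Tδ : ((S × A) → ℝ) → ((S × A) → ℝ))
    (hTπ : ∀ f, Tπ f = r + γ • Pπ f) (hTδ : ∀ f, Tδ f = r + γ • Pδ f)
    (Qπ Qπk : (S × A) → ℝ)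
    (hQπ : Tπ Qπ = Qπ) (hQπk : Tδ^[k - 1] (Tπ Qπk) = Qπk) :
    Qπ - Qπk =
      ∑' j : ℕ, γ ^ (k * j) • (⇑Pπ)^[k * j] (Tπ^[k] Qπk - Tδ^[k - 1] (Tπ Qπk)) :=
  stmt_6_general Pπ hPπ r γ hγ0 hγ1 k hk Tπ Tδ hTπ Qπ Qπk hQπ hQπk
end

section
/- In a finite MDP with rewards bounded in absolute value by R_max, for every state-action pair the optimal Q-function Q* and the k-persistent optimal Q-function Q*_k satisfy Q*(s,a) − Q*_k(s,a) ≤ 2γ R_max / (1 − γ) for all k ≥ 2. -/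
theorem stmt_7 {S A : Type*} [Fintype S] [Fintype A] [Nonempty S] [Nonempty A]
    (P : S → A → S → ℝ)
    (hP0 : ∀ s a s', 0 ≤ P s a s') (hP1 : ∀ s a, ∑ s', P s a s' = 1)
    (r : S × A → ℝ) (Rmax : ℝ) (hr : ∀ sa, |r sa| ≤ Rmax)
    (γ : ℝ) (hγ0 : 0 ≤ γ) (hγ1 : γ < 1)
    (k : ℕ) (hk : 2 ≤ k)
    (Tstar Tδ : (S × A → ℝ) → (S × A → ℝ))
    (hTstar : ∀ f sa, Tstar f sa =
      r sa + γ * ∑ s', P sa.1 sa.2 s' *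
        (Finset.univ.sup' Finset.univ_nonempty fun a' => f (s', a')))
    (hTδ : ∀ f sa, Tδ f sa = r sa + γ * ∑ s', P sa.1 sa.2 s' * f (s', sa.2))
    (Qstar Qk : S × A → ℝ)
    (hQstar : Tstar Qstar = Qstar) (hQk : Tδ^[k - 1] (Tstar Qk) = Qk) :
    ∀ sa : S × A, Qstar sa - Qk sa ≤ 2 * γ * Rmax / (1 - γ) := by
  have hRmax : 0 ≤ Rmax := le_trans (abs_nonneg _) (hr (Classical.arbitrary _))
  have h1γ : 0 < 1 - γ := by linarith
  set M := Rmax / (1 - γ) with hMdef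
  have hM : 0 ≤ M := div_nonneg hRmax h1γ.le
  have hRM : (1 - γ) * M = Rmax := by
    rw [hMdef]; field_simp
  -- sum bound
  have hsum : ∀ (sa : S × A) (h : S → ℝ) (C : ℝ), (∀ s', |h s'| ≤ C) →
      |∑ s', P sa.1 sa.2 s' * h s'| ≤ C := by
    intro sa h C hC
    calc |∑ s', P sa.1 sa.2 s' * h s'| ≤ ∑ s', |P sa.1 sa.2 s' * h s'| :=
          Finset.abs_sum_le_sum_abs _ _
      _ ≤ ∑ s', P sa.1 sa.2 s' * C := by
          apply Finset.sum_le_sum; intro s' _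
          rw [abs_mul, abs_of_nonneg (hP0 _ _ _)]
          exact mul_le_mul_of_nonneg_left (hC s') (hP0 _ _ _)
      _ = C := by rw [← Finset.sum_mul, hP1]; ring
  -- sup' abs bound
  have hsup : ∀ (f : S × A → ℝ) (C : ℝ) (s' : S), (∀ sa, |f sa| ≤ C) →
      |Finset.univ.sup' Finset.univ_nonempty (fun a' => f (s', a'))| ≤ C := by
    intro f C s' hf
    rw [abs_le]
    obtain ⟨a⟩ := ‹Nonempty A›
    constructor
    · have h1 := Finset.le_sup' (fun a' => f (s', a')) (Finset.mem_univ a)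
      have h2 := (abs_le.mp (hf (s', a))).1
      exact le_trans h2 h1
    · apply Finset.sup'_le; intro a' _; exact (abs_le.mp (hf (s', a'))).2
  -- operator bounds
  have hTδ_bound : ∀ (f : S × A → ℝ) (C : ℝ), (∀ sa, |f sa| ≤ C) →
      ∀ sa, |Tδ f sa| ≤ Rmax + γ * C := by
    intro f C hf sa
    rw [hTδ]
    have h1 := hsum sa (fun s' => f (s', sa.2)) C (fun s' => hf _)
    calc |r sa + γ * ∑ s', P sa.1 sa.2 s' * f (s', sa.2)|
        ≤ |r sa| + |γ * ∑ s', P sa.1 sa.2 s' * f (s', sa.2)| := abs_add_le _ _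
      _ ≤ Rmax + γ * C := by
          apply add_le_add (hr sa)
          rw [abs_mul, abs_of_nonneg hγ0]
          exact mul_le_mul_of_nonneg_left h1 hγ0
  have hTstar_bound : ∀ (f : S × A → ℝ) (C : ℝ), (∀ sa, |f sa| ≤ C) →
      ∀ sa, |Tstar f sa| ≤ Rmax + γ * C := by
    intro f C hf sa
    rw [hTstar]
    have h1 := hsum sa
      (fun s' => Finset.univ.sup' Finset.univ_nonempty (fun a' => f (s', a'))) C
      (fun s' => hsup f C s' hf)
    calc |r sa + γ * ∑ s', P sa.1 sa.2 s' *
          (Finset.univ.sup' Finset.univ_nonempty fun a' => f (s', a'))|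
        ≤ |r sa| + |γ * ∑ s', P sa.1 sa.2 s' *
          (Finset.univ.sup' Finset.univ_nonempty fun a' => f (s', a'))| := abs_add_le _ _
      _ ≤ Rmax + γ * C := by
          apply add_le_add (hr sa)
          rw [abs_mul, abs_of_nonneg hγ0]
          exact mul_le_mul_of_nonneg_left h1 hγ0
  have hne : (Finset.univ : Finset (S × A)).Nonempty := Finset.univ_nonempty
  -- Qstar bound
  have hQstar_bound : ∀ sa, |Qstar sa| ≤ M := by
    set B := Finset.univ.sup' hne (fun sa => |Qstar sa|) with hB
    have hBle : ∀ sa, |Qstar sa| ≤ B := fun sa =>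
      Finset.le_sup' (fun sa => |Qstar sa|) (Finset.mem_univ sa)
    obtain ⟨sa0, _, hsa0⟩ := Finset.exists_mem_eq_sup' hne (fun sa => |Qstar sa|)
    have hB0 : 0 ≤ B := le_trans (abs_nonneg _) (hBle sa0)
    have hstep : B ≤ Rmax + γ * B := by
      calc B = |Qstar sa0| := hB.trans hsa0
        _ = |Tstar Qstar sa0| := by rw [congrFun hQstar sa0]
        _ ≤ Rmax + γ * B := hTstar_bound Qstar B hBle sa0
    have hBM : B ≤ M := by nlinarith
    intro sa; exact le_trans (hBle sa) hBM
  -- Qk bound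
  set B := Finset.univ.sup' hne (fun sa => |Qk sa|) with hB
  have hBle : ∀ sa, |Qk sa| ≤ B := fun sa =>
    Finset.le_sup' (fun sa => |Qk sa|) (Finset.mem_univ sa)
  have hB0 : 0 ≤ B := le_trans (abs_nonneg _) (hBle (Classical.arbitrary _))
  have hiter : ∀ j sa, |Tδ^[j] (Tstar Qk) sa| ≤ (1 - γ ^ (j + 1)) * M + γ ^ (j + 1) * B := by
    intro j
    induction j with
    | zero =>
        intro sa
        have h1 := hTstar_bound Qk B hBle sa
        calc |Tδ^[0] (Tstar Qk) sa| = |Tstar Qk sa| := rfl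
          _ ≤ Rmax + γ * B := h1
          _ = (1 - γ ^ (0 + 1)) * M + γ ^ (0 + 1) * B := by rw [← hRM]; ring
    | succ j ih =>
        intro sa
        rw [Function.iterate_succ_apply']
        have h1 := hTδ_bound (Tδ^[j] (Tstar Qk)) ((1 - γ ^ (j + 1)) * M + γ ^ (j + 1) * B) ih sa
        calc |Tδ (Tδ^[j] (Tstar Qk)) sa|
            ≤ Rmax + γ * ((1 - γ ^ (j + 1)) * M + γ ^ (j + 1) * B) := h1
          _ = (1 - γ ^ (j + 1 + 1)) * M + γ ^ (j + 1 + 1) * B := by rw [← hRM]; ring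
  have hk1 : k - 1 + 1 = k := Nat.sub_add_cancel (by omega)
  have hγk : γ ^ k < 1 := pow_lt_one₀ hγ0 hγ1 (by omega)
  have hBM : B ≤ M := by
    obtain ⟨sa0, _, hsa0⟩ := Finset.exists_mem_eq_sup' hne (fun sa => |Qk sa|)
    have := hiter (k - 1) sa0
    rw [hk1, hQk, ← hsa0] at this
    nlinarith
  -- final
  intro sa
  have hk2 : k - 1 = (k - 2) + 1 := by omega
  have hQk' : Qk sa = Tδ (Tδ^[k - 2] (Tstar Qk)) sa := by
    conv_lhs => rw [← hQk, hk2, Function.iterate_succ_apply']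
  set g := Tδ^[k - 2] (Tstar Qk) with hg
  have hgM : ∀ sa, |g sa| ≤ M := by
    intro sa'
    have := hiter (k - 2) sa'
    have hγp : (0:ℝ) ≤ γ ^ (k - 2 + 1) := pow_nonneg hγ0 _
    have hγp1 : γ ^ (k - 2 + 1) ≤ 1 := pow_le_one₀ hγ0 hγ1.le
    nlinarith [mul_nonneg hγp (sub_nonneg.mpr hBM)]
  have hQs : Qstar sa = Tstar Qstar sa := (congrFun hQstar sa).symm
  rw [hQs, hQk', hTstar, hTδ]
  have hdiff : ∀ s' ∈ (Finset.univ : Finset S),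
      P sa.1 sa.2 s' * (Finset.univ.sup' Finset.univ_nonempty fun a' => Qstar (s', a'))
        - P sa.1 sa.2 s' * g (s', sa.2) ≤ P sa.1 sa.2 s' * (2 * M) := by
    intro s' _
    rw [← mul_sub]
    apply mul_le_mul_of_nonneg_left _ (hP0 _ _ _)
    have h1 : (Finset.univ.sup' Finset.univ_nonempty fun a' => Qstar (s', a')) ≤ M := by
      apply Finset.sup'_le; intro a' _; exact (abs_le.mp (hQstar_bound (s', a'))).2
    have h2 : -M ≤ g (s', sa.2) := (abs_le.mp (hgM (s', sa.2))).1
    linarith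
  have hsum2 : ∑ s', P sa.1 sa.2 s' *
      (Finset.univ.sup' Finset.univ_nonempty fun a' => Qstar (s', a'))
      - ∑ s', P sa.1 sa.2 s' * g (s', sa.2) ≤ 2 * M := by
    rw [← Finset.sum_sub_distrib]
    calc _ ≤ ∑ s', P sa.1 sa.2 s' * (2 * M) := Finset.sum_le_sum hdiff
      _ = 2 * M := by rw [← Finset.sum_mul, hP1]; ring
  have hfin : 2 * γ * Rmax / (1 - γ) = γ * (2 * M) := by
    rw [hMdef]; field_simp
  rw [hfin]
  have := mul_le_mul_of_nonneg_left hsum2 hγ0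
  ring_nf
  ring_nf at this
  linarith
end

section
/- Let Q : S × A → ℝ with S, A finite, π the greedy policy with respect to Q, T*_k the k-persistent Bellman optimal operator with discount γ^k, and Q^π_k the fixed point of the k-persistent expectation operator T^π_k for π. Then Q^π_k − Q = (Id − γ^k P^π_k)^{-1} (T*_k Q − Q), and consequently for any initial distribution ρ over states, J^{ρ,π}_k ≥ J^ρ − (1/(1−γ^k)) ‖T*_k Q − Q‖_{1,η^{ρ,π}}, where J^ρ = ∑_s ρ(s) max_a Q(s,a), J^{ρ,π}_k = ∑_s ρ(s) ∑_a π(a|s) Q^π_k(s,a), and η^{ρ,π} = (1−γ^k) (ρπ) (Id − γ^k P^π_k)^{-1} is the normalized discounted state-action occupancy. -/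
/-!
The Bellman equation `Q^π_k = T^π_k Q^π_k` and greediness of `π` (which gives `T*_k Q = T^π_k Q`)
combine into `(Id - γ^k P^π_k) (Q^π_k - Q) = T*_k Q - Q`. The operator `P^π_k` is positive and fixes
constants, hence a sup-norm contraction, so `Id - γ^k P^π_k` is inverted by its Neumann series.
Positivity of every term bounds that series below by minus the Neumann series of `|T*_k Q - Q|`,
and averaging against `ρ` along `π` yields the performance bound.
-/

open Finset

section Neumann

variable {𝕜 E : Type*} [NontriviallyNormedField 𝕜] [NormedAddCommGroup E] [NormedSpace 𝕜 E]
  [CompleteSpace E] {T : E →L[𝕜] E}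

theorem summable_pow_apply_of_norm_lt_one (hT : ‖T‖ < 1) (w : E) :
    Summable fun n => (T ^ n) w :=
  ((summable_geometric_of_norm_lt_one hT).hasSum.mapL (ContinuousLinearMap.apply 𝕜 E w)).summable

theorem hasSum_pow_apply_of_sub_apply_eq (hT : ‖T‖ < 1) {v w : E} (h : v - T v = w) :
    HasSum (fun n => (T ^ n) w) v := by
  have hsum :=
    (summable_geometric_of_norm_lt_one hT).hasSum.mapL (ContinuousLinearMap.apply 𝕜 E w)
  have hv : (∑' n, T ^ n) w = v := by
    rw [← h]
    calc (∑' n, T ^ n) (v - T v) = ((∑' n, T ^ n) * (1 - T)) v := rfl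
      _ = v := by rw [geom_series_mul_neg T hT]; rfl
  simpa only [ContinuousLinearMap.apply_apply, hv] using hsum

end Neumann

theorem ContinuousLinearMap.monotone_pow {R M : Type*} [Semiring R] [TopologicalSpace M]
    [AddCommMonoid M] [Module R M] [Preorder M] {L : M →L[R] M} (hmono : Monotone L) (n : ℕ) :
    Monotone (L ^ n) := by
  rw [FunLike.coe_pow_eq_iterate]
  exact hmono.iterate n

theorem hasSum_sum_mul_apply {X Y : Type*} [Fintype Y] {f : ℕ → X → ℝ} {a : X → ℝ}
    (hf : HasSum f a) (w : Y → ℝ) (g : Y → X) :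
    HasSum (fun n => ∑ y, w y * f n (g y)) (∑ y, w y * a (g y)) :=
  hasSum_sum fun y _ => (Pi.hasSum.1 hf (g y)).mul_left (w y)

theorem Finset.sup'_eq_of_forall_le {α β : Type*} [SemilatticeSup α] {s : Finset β}
    (H : s.Nonempty) (f : β → α) {b : β} (hb : b ∈ s) (hle : ∀ a ∈ s, f a ≤ f b) :
    s.sup' H f = f b :=
  le_antisymm (sup'_le H f hle) (le_sup' f hb)

section PositiveOperator

variable {X : Type*} [Fintype X] {L : (X → ℝ) →L[ℝ] (X → ℝ)} {c : ℝ}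

theorem opNorm_le_one_of_monotone_of_map_one (hmono : Monotone L) (hone : L 1 = 1) :
    ‖L‖ ≤ 1 := by
  refine L.opNorm_le_bound zero_le_one fun f => ?_
  have hf : ∀ x, -‖f‖ ≤ f x ∧ f x ≤ ‖f‖ := fun x => abs_le.1 (norm_le_pi_norm f x)
  have hlower : -‖f‖ • (1 : X → ℝ) ≤ f := fun x => by simpa using (hf x).1
  have hupper : f ≤ ‖f‖ • (1 : X → ℝ) := fun x => by simpa using (hf x).2
  have hLlower := hmono hlower
  have hLupper := hmono hupper
  rw [map_smul, hone] at hLlower hLupper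
  rw [one_mul, pi_norm_le_iff_of_nonneg (norm_nonneg f)]
  intro x
  exact abs_le.2 ⟨by simpa using hLlower x, by simpa using hLupper x⟩

variable (hmono : Monotone L) (hone : L 1 = 1) (hc : |c| < 1)
include hmono hone hc

theorem norm_smul_lt_one : ‖c • L‖ < 1 :=
  calc ‖c • L‖ ≤ |c| * ‖L‖ := norm_smul_le c L
    _ ≤ |c| * 1 := by gcongr; exact opNorm_le_one_of_monotone_of_map_one hmono hone
    _ < 1 := by rwa [mul_one]

theorem hasSum_smul_pow_apply {v w : X → ℝ} (h : v - c • L v = w) :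
    HasSum (fun n => c ^ n • (L ^ n) w) v := by
  have h' : v - (c • L) v = w := by rwa [smul_apply]
  have hT : ‖c • L‖ < 1 := norm_smul_lt_one hmono hone hc
  simpa only [smul_pow, smul_apply] using hasSum_pow_apply_of_sub_apply_eq hT h'

theorem summable_smul_pow_apply (w : X → ℝ) : Summable fun n => c ^ n • (L ^ n) w := by
  have hT : ‖c • L‖ < 1 := norm_smul_lt_one hmono hone hc
  simpa only [smul_pow, smul_apply] using summable_pow_apply_of_norm_lt_one hT w

theorem neg_tsum_le_sum_mul_apply {Y : Type*} [Fintype Y] (hc0 : 0 ≤ c) {v w : X → ℝ}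
    (h : v - c • L v = w) {ρ : Y → ℝ} (hρ : ∀ y, 0 ≤ ρ y) (g : Y → X) :
    -∑' n, c ^ n * ∑ y, ρ y * (L ^ n) |w| (g y) ≤ ∑ y, ρ y * v (g y) := by
  obtain ⟨u, hu⟩ := summable_smul_pow_apply hmono hone hc |w|
  have hle : -u ≤ v := by
    refine hasSum_le (fun n => ?_) hu.neg (hasSum_smul_pow_apply hmono hone hc h)
    rw [← smul_neg, ← map_neg]
    have hmono_pow := ContinuousLinearMap.monotone_pow hmono n
    exact smul_le_smul_of_nonneg_left (hmono_pow fun x => neg_abs_le (w x)) (pow_nonneg hc0 n)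
  have hweighted : ∑' n, c ^ n * ∑ y, ρ y * (L ^ n) |w| (g y) = ∑ y, ρ y * u (g y) := by
    rw [← (hasSum_sum_mul_apply hu ρ g).tsum_eq]
    simp only [mul_sum, Pi.smul_apply, smul_eq_mul, mul_left_comm]
  rw [hweighted, ← sum_neg_distrib]
  exact sum_le_sum fun y _ => by
    simpa only [Pi.neg_apply, mul_neg] using mul_le_mul_of_nonneg_left (hle (g y)) (hρ y)

end PositiveOperator

section PolicyTransition

variable {S A : Type*} [Fintype S] [Fintype A]

noncomputable def policyTransition (P : S → A → S → ℝ) (π : S → A) :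
    (S × A → ℝ) →L[ℝ] (S × A → ℝ) :=
  LinearMap.toContinuousLinearMap
    { toFun := fun f sa => ∑ s', P sa.1 sa.2 s' * f (s', π s')
      map_add' := fun f g => by ext; simp [mul_add, sum_add_distrib]
      map_smul' := fun c f => by ext; simp [mul_left_comm, mul_sum] }

variable {P : S → A → S → ℝ} {π : S → A}

theorem policyTransition_apply (f : S × A → ℝ) (sa : S × A) :
    policyTransition P π f sa = ∑ s', P sa.1 sa.2 s' * f (s', π s') :=
  rfl

theorem monotone_policyTransition (hP0 : ∀ s a s', 0 ≤ P s a s') :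
    Monotone (policyTransition P π) := fun _ _ hfg _ =>
  sum_le_sum fun _ _ => mul_le_mul_of_nonneg_left (hfg _) (hP0 _ _ _)

theorem policyTransition_map_one (hP1 : ∀ s a, ∑ s', P s a s' = 1) :
    policyTransition P π 1 = 1 := by
  ext sa
  simp [policyTransition_apply, hP1]

end PolicyTransition

theorem stmt_13_general {S A : Type*} [Fintype S] [Fintype A] [Nonempty A]
    (Pk : S → A → S → ℝ)
    (hP0 : ∀ s a s', 0 ≤ Pk s a s') (hP1 : ∀ s a, ∑ s', Pk s a s' = 1)
    (rk : S × A → ℝ) (γ : ℝ) (hγ0 : 0 ≤ γ) (hγ1 : γ < 1)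
    (k : ℕ) (hk : 1 ≤ k)
    (Q : S × A → ℝ) (π : S → A)
    (hgreedy : ∀ s a, Q (s, a) ≤ Q (s, π s))
    (Pπk : (S × A → ℝ) → (S × A → ℝ))
    (hPπk : ∀ f sa, Pπk f sa = ∑ s', Pk sa.1 sa.2 s' * f (s', π s'))
    (Tπk : (S × A → ℝ) → (S × A → ℝ)) (hTπk : ∀ f, Tπk f = rk + γ ^ k • Pπk f)
    (Tstark : (S × A → ℝ) → (S × A → ℝ))
    (hTstark : ∀ f sa, Tstark f sa =
      rk sa + γ ^ k * ∑ s', Pk sa.1 sa.2 s' *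
        (Finset.univ.sup' Finset.univ_nonempty fun a' => f (s', a')))
    (Qπk : S × A → ℝ) (hQπk : Tπk Qπk = Qπk)
    (ρ : S → ℝ) (hρ0 : ∀ s, 0 ≤ ρ s) :
    (Qπk - Q = ∑' m : ℕ, γ ^ (k * m) • Pπk^[m] (Tstark Q - Q)) ∧
      (∑ s, ρ s * Qπk (s, π s) ≥
        (∑ s, ρ s * (Finset.univ.sup' Finset.univ_nonempty fun a => Q (s, a))) -
          (1 / (1 - γ ^ k)) *
            ((1 - γ ^ k) * ∑' m : ℕ, γ ^ (k * m) *
              ∑ s, ρ s * (Pπk^[m] fun x => |Tstark Q x - Q x|) (s, π s))) := by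
  obtain rfl : Pπk = policyTransition Pk π := funext fun f => funext (hPπk f)
  have hsup s : univ.sup' univ_nonempty (fun a => Q (s, a)) = Q (s, π s) :=
    sup'_eq_of_forall_le _ _ (mem_univ _) fun a _ => hgreedy s a
  simp only [pow_mul, ← FunLike.coe_pow_eq_iterate, hsup]
  set c := γ ^ k
  have hc0 : 0 ≤ c := pow_nonneg hγ0 k
  have hc1 : c < 1 := pow_lt_one₀ hγ0 hγ1 (by omega)
  have hc : |c| < 1 := by rwa [abs_of_nonneg hc0]
  have hmono := monotone_policyTransition (π := π) hP0
  have hone := policyTransition_map_one (π := π) hP1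
  have hbellman : (Qπk - Q) - c • policyTransition Pk π (Qπk - Q) = Tstark Q - Q := by
    ext sa
    have hfix := congrFun hQπk sa
    simp only [hTπk, Pi.add_apply, Pi.smul_apply, smul_eq_mul] at hfix
    simp only [Pi.sub_apply, map_sub, Pi.smul_apply, smul_eq_mul, hTstark, hsup]
    rw [← policyTransition_apply]
    linarith
  refine ⟨(hasSum_smul_pow_apply hmono hone hc hbellman).tsum_eq.symm, ?_⟩
  have hlower := neg_tsum_le_sum_mul_apply hmono hone hc hc0 hbellman hρ0 fun s => (s, π s)
  simp only [Pi.abs_def, Pi.sub_apply, mul_sub, sum_sub_distrib] at hlower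
  rw [one_div, inv_mul_cancel_left₀ (sub_pos.2 hc1).ne']
  linarith

theorem stmt_13 {S A : Type*} [Fintype S] [Fintype A] [Nonempty A]
    (Pk : S → A → S → ℝ)
    (hP0 : ∀ s a s', 0 ≤ Pk s a s') (hP1 : ∀ s a, ∑ s', Pk s a s' = 1)
    (rk : S × A → ℝ) (γ : ℝ) (hγ0 : 0 ≤ γ) (hγ1 : γ < 1)
    (k : ℕ) (hk : 1 ≤ k)
    (Q : S × A → ℝ) (π : S → A)
    (hgreedy : ∀ s a, Q (s, a) ≤ Q (s, π s))
    (Pπk : (S × A → ℝ) → (S × A → ℝ))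
    (hPπk : ∀ f sa, Pπk f sa = ∑ s', Pk sa.1 sa.2 s' * f (s', π s'))
    (Tπk : (S × A → ℝ) → (S × A → ℝ)) (hTπk : ∀ f, Tπk f = rk + γ ^ k • Pπk f)
    (Tstark : (S × A → ℝ) → (S × A → ℝ))
    (hTstark : ∀ f sa, Tstark f sa =
      rk sa + γ ^ k * ∑ s', Pk sa.1 sa.2 s' *
        (Finset.univ.sup' Finset.univ_nonempty fun a' => f (s', a')))
    (Qπk : S × A → ℝ) (hQπk : Tπk Qπk = Qπk)
    (ρ : S → ℝ) (hρ0 : ∀ s, 0 ≤ ρ s) (hρ1 : ∑ s, ρ s = 1) :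
    (Qπk - Q = ∑' m : ℕ, γ ^ (k * m) • Pπk^[m] (Tstark Q - Q)) ∧
      (∑ s, ρ s * Qπk (s, π s) ≥
        (∑ s, ρ s * (Finset.univ.sup' Finset.univ_nonempty fun a => Q (s, a))) -
          (1 / (1 - γ ^ k)) *
            ((1 - γ ^ k) * ∑' m : ℕ, γ ^ (k * m) *
              ∑ s, ρ s * (Pπk^[m] fun x => |Tstark Q x - Q x|) (s, π s))) :=
  stmt_13_general Pk hP0 hP1 rk γ hγ0 hγ1 k hk Q π hgreedy Pπk hPπk Tπk hTπk Tstark hTstark Qπk hQπk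
    ρ hρ0
end

section
/- In a finite MDP, let ε^(j)_k denote the cumulative k-step error T*_k Q^(j) − Q^(j+k) and ε^(j) the per-iteration errors defined by ε^(j) = T* Q^(j) − Q^(j+1) if j mod k = 0 and ε^(j) = T^δ Q^(j) − Q^(j+1) otherwise. Then for every j with j mod k = 0, ε^(j)_k = ∑_{l=1}^{k} γ^{k−l} (P^δ)^{k−l} ε^(j+l−1). -/
theorem stmt_16 {S A : Type*} [Fintype S] [Fintype A] [Nonempty A]
    (P : S → A → S → ℝ)
    (hP0 : ∀ s a s', 0 ≤ P s a s') (hP1 : ∀ s a, ∑ s', P s a s' = 1)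
    (r : S × A → ℝ) (γ : ℝ) (hγ0 : 0 ≤ γ) (hγ1 : γ < 1)
    (k : ℕ) (hk : 1 ≤ k)
    (Pδ : (S × A → ℝ) → (S × A → ℝ))
    (hPδ : ∀ f sa, Pδ f sa = ∑ s', P sa.1 sa.2 s' * f (s', sa.2))
    (Tstar : (S × A → ℝ) → (S × A → ℝ))
    (hTstar : ∀ f sa, Tstar f sa =
      r sa + γ * ∑ s', P sa.1 sa.2 s' *
        (Finset.univ.sup' Finset.univ_nonempty fun a' => f (s', a')))
    (Tδ : (S × A → ℝ) → (S × A → ℝ)) (hTδ : ∀ f, Tδ f = r + γ • Pδ f)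
    (Q : ℕ → S × A → ℝ)
    (ε : ℕ → S × A → ℝ)
    (hε : ∀ j, ε j = if j % k = 0 then Tstar (Q j) - Q (j + 1) else Tδ (Q j) - Q (j + 1)) :
    ∀ j, j % k = 0 →
      Tδ^[k - 1] (Tstar (Q j)) - Q (j + k) =
        ∑ l ∈ Finset.Icc 1 k, γ ^ (k - l) • Pδ^[k - l] (ε (j + l - 1)) := by
  intro j hj
  have hadd : ∀ f g : S × A → ℝ, Pδ (f + g) = Pδ f + Pδ g := by
    intro f g; funext sa
    simp [hPδ, mul_add, Finset.sum_add_distrib]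
  have hsmul : ∀ (c : ℝ) (f : S × A → ℝ), Pδ (c • f) = c • Pδ f := by
    intro c f; funext sa
    simp [hPδ, Finset.mul_sum, mul_left_comm]
  set L : (S × A → ℝ) →ₗ[ℝ] (S × A → ℝ) :=
    { toFun := Pδ, map_add' := hadd, map_smul' := hsmul } with hLdef
  have hL : ∀ f, Pδ f = L f := fun f => rfl
  have hTsub : ∀ f g, Tδ f - Tδ g = γ • Pδ (f - g) := by
    intro f g
    rw [hTδ, hTδ, hL, hL, hL, map_sub, smul_sub]
    abel
  -- main induction
  have key : ∀ n, n + 1 ≤ k →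
      Tδ^[n] (Tstar (Q j)) - Q (j + n + 1) =
        ∑ l ∈ Finset.Icc 1 (n + 1), γ ^ (n + 1 - l) • Pδ^[n + 1 - l] (ε (j + l - 1)) := by
    intro n
    induction n with
    | zero =>
      intro _
      simp [hε j, hj]
    | succ n ih =>
      intro hn
      have hn' : n + 1 ≤ k := by omega
      have hmod : (j + n + 1) % k ≠ 0 := by
        obtain ⟨m, rfl⟩ := Nat.dvd_of_mod_eq_zero hj
        rw [add_assoc, Nat.mul_add_mod, Nat.mod_eq_of_lt (by omega)]
        omega
      have hεval : ε (j + n + 1) = Tδ (Q (j + n + 1)) - Q (j + n + 2) := by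
        rw [hε (j + n + 1), if_neg hmod]
      have step : Tδ^[n + 1] (Tstar (Q j)) - Q (j + (n + 1) + 1) =
          γ • Pδ (Tδ^[n] (Tstar (Q j)) - Q (j + n + 1)) + ε (j + n + 1) := by
        rw [Function.iterate_succ_apply', hεval, ← hTsub]
        have : j + (n + 1) + 1 = j + n + 2 := by omega
        rw [this]; abel
      rw [step, ih hn']
      -- RHS split
      rw [Finset.sum_Icc_succ_top (by omega : 1 ≤ n + 1 + 1)]
      have hlast : γ ^ (n + 1 + 1 - (n + 2)) • Pδ^[n + 1 + 1 - (n + 2)] (ε (j + (n + 2) - 1))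
          = ε (j + n + 1) := by
        have h1 : n + 1 + 1 - (n + 2) = 0 := by omega
        have h2 : j + (n + 2) - 1 = j + n + 1 := by omega
        rw [h1, h2]; simp
      rw [hlast]
      congr 1
      rw [hL, map_sum, Finset.smul_sum]
      apply Finset.sum_congr rfl
      intro l hl
      have hl' : 1 ≤ l ∧ l ≤ n + 1 := by simpa [Finset.mem_Icc] using hl
      have h3 : n + 1 + 1 - l = (n + 1 - l) + 1 := by omega
      rw [h3, map_smul, smul_smul, ← pow_succ', ← hL, Function.iterate_succ_apply']
  have hkey := key (k - 1) (by omega)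
  have h1 : k - 1 + 1 = k := by omega
  rw [h1] at hkey
  have h2 : j + (k - 1) + 1 = j + k := by omega
  rw [h2] at hkey
  exact hkey
end
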